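/- Closed-form minimizer for the Gaussian loss (Equation 39): Take ρ(t) = t and b = 1 (so the conditional objective is the Gaussian negative log-likelihood 𝓛(γ) = (1/M) Σₘ sₘ(γ) + log det Σ(γ)), and assume a ≠ 0 (so d = a^H Σ₀⁻¹ a > 0). Let S = (1/M) Σ_{m=1}^M yₘ yₘ^H be the sample covariance matrix. Then the point γ̂ = max( (a^H Σ₀⁻¹ (S − Σ₀) Σ₀⁻¹ a) / d², 0 ) is a global minimizer of 𝓛 over γ ∈ [0,∞). -/

import Mathlib

open Matrix ComplexOrder

noncomputable section

/-- The covariance matrix `Σ(γ) = Σ₀ + γ·a aᴴ`. -/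
def Sig {L : ℕ} (S0 : Matrix (Fin L) (Fin L) ℂ) (a : Fin L → ℂ) (γ : ℝ) :
    Matrix (Fin L) (Fin L) ℂ :=
  S0 + (γ : ℂ) • vecMulVec a (star a)

/-- The squared Mahalanobis distance `s(γ) = yᴴ Σ(γ)⁻¹ y` (a real number). -/
def mdist {L : ℕ} (S0 : Matrix (Fin L) (Fin L) ℂ) (a : Fin L → ℂ) (y : Fin L → ℂ)
    (γ : ℝ) : ℝ :=
  (star y ⬝ᵥ (Sig S0 a γ)⁻¹ *ᵥ y).re

/-- The conditional objective `𝓛(γ) = (1/(bM)) Σₘ ρ(sₘ(γ)) + log det Σ(γ)`. -/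
def obj {L M : ℕ} (S0 : Matrix (Fin L) (Fin L) ℂ) (a : Fin L → ℂ)
    (y : Fin M → Fin L → ℂ) (b : ℝ) (ρ : ℝ → ℝ) (γ : ℝ) : ℝ :=
  (1 / (b * M)) * ∑ m, ρ (mdist S0 a (y m) γ) + Real.log ((Sig S0 a γ).det.re)

/-- The scalar `d = aᴴ Σ₀⁻¹ a`. -/
def dcoef {L : ℕ} (S0 : Matrix (Fin L) (Fin L) ℂ) (a : Fin L → ℂ) : ℝ :=
  (star a ⬝ᵥ S0⁻¹ *ᵥ a).re

section helpers

set_option linter.unusedSectionVars false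

variable {n : Type*} [Fintype n] [DecidableEq n]

lemma vecMulVec_mul' (w v : n → ℂ) (A : Matrix n n ℂ) :
    vecMulVec w v * A = vecMulVec w (v ᵥ* A) := by
  ext i j
  simp [Matrix.mul_apply, vecMulVec_apply, vecMul, dotProduct, Finset.mul_sum, mul_assoc]

lemma vecMulVec_mul_vecMulVec' (w v w' v' : n → ℂ) :
    vecMulVec w v * vecMulVec w' v' = (v ⬝ᵥ w') • vecMulVec w v' := by
  ext i j
  simp only [Matrix.mul_apply, vecMulVec_apply, dotProduct, Matrix.smul_apply, smul_eq_mul,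
    Finset.sum_mul, Finset.mul_sum]
  exact Finset.sum_congr rfl fun _ _ => by ring

lemma vecMulVec_mulVec' (w v x : n → ℂ) :
    vecMulVec w v *ᵥ x = (v ⬝ᵥ x) • w := by
  ext i
  simp only [mulVec, vecMulVec_apply, dotProduct, Pi.smul_apply, smul_eq_mul, Finset.sum_mul]
  exact Finset.sum_congr rfl fun _ _ => by ring

lemma star_dot (u v : n → ℂ) : star (u ⬝ᵥ v) = star u ⬝ᵥ star v := by
  simp only [dotProduct, star_sum, star_mul', Pi.star_apply]

lemma herm_cross {A : Matrix n n ℂ} (hA : A.IsHermitian) (x y : n → ℂ) :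
    star x ⬝ᵥ A *ᵥ y = starRingEnd ℂ (star y ⬝ᵥ A *ᵥ x) := by
  have h : starRingEnd ℂ (star y ⬝ᵥ A *ᵥ x) = star (star y ⬝ᵥ A *ᵥ x) := rfl
  rw [h, star_dot, star_star, star_mulVec, hA.eq, dotProduct_comm y,
    ← Matrix.dotProduct_mulVec, dotProduct_comm]

lemma herm_self_re {A : Matrix n n ℂ} (hA : A.IsHermitian) (x : n → ℂ) :
    star x ⬝ᵥ A *ᵥ x = (((star x ⬝ᵥ A *ᵥ x).re : ℝ) : ℂ) :=
  (Complex.conj_eq_iff_re.mp (herm_cross hA x x).symm).symm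

lemma sum_mulVec' {ι : Type*} (s : Finset ι) (A : ι → Matrix n n ℂ) (v : n → ℂ) :
    (∑ i ∈ s, A i) *ᵥ v = ∑ i ∈ s, A i *ᵥ v := by
  ext j
  simp [mulVec, dotProduct, Matrix.sum_apply, Finset.sum_mul]
  rw [Finset.sum_comm]

lemma mulVec_sum' {ι : Type*} (s : Finset ι) (A : Matrix n n ℂ) (v : ι → n → ℂ) :
    A *ᵥ (∑ i ∈ s, v i) = ∑ i ∈ s, A *ᵥ v i := by
  ext j
  simp [mulVec, dotProduct, Finset.sum_apply, Finset.mul_sum]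
  rw [Finset.sum_comm]

lemma dotProduct_sum' {ι : Type*} (s : Finset ι) (u : n → ℂ) (v : ι → n → ℂ) :
    u ⬝ᵥ (∑ i ∈ s, v i) = ∑ i ∈ s, u ⬝ᵥ v i := by
  simp [dotProduct, Finset.sum_apply, Finset.mul_sum]
  rw [Finset.sum_comm]

end helpers

section mainlemmas

variable {L : ℕ} {S0 : Matrix (Fin L) (Fin L) ℂ} {a : Fin L → ℂ}

lemma dcoef_complex (hS0 : S0.PosDef) :
    star a ⬝ᵥ S0⁻¹ *ᵥ a = ((dcoef S0 a : ℝ) : ℂ) :=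
  herm_self_re hS0.isHermitian.inv a

lemma dcoef_pos (hS0 : S0.PosDef) (ha : a ≠ 0) : 0 < dcoef S0 a := by
  have := hS0.inv.re_dotProduct_pos ha
  simpa [RCLike.re_to_complex, dcoef] using this

lemma S0_mul_inv (hS0 : S0.PosDef) : S0 * S0⁻¹ = 1 :=
  Matrix.mul_nonsing_inv _ (isUnit_iff_ne_zero.mpr hS0.det_pos.ne')

lemma Sig_inv (hS0 : S0.PosDef) (ha : a ≠ 0) {γ : ℝ} (hγ : 0 ≤ γ) :
    (Sig S0 a γ)⁻¹
      = S0⁻¹ - ((γ / (1 + γ * dcoef S0 a) : ℝ) : ℂ) •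
          (S0⁻¹ * vecMulVec a (star a) * S0⁻¹) := by
  have hd := dcoef_pos hS0 ha
  have ht : (0:ℝ) < 1 + γ * dcoef S0 a := by nlinarith
  apply Matrix.inv_eq_right_inv
  set β : ℂ := ((γ / (1 + γ * dcoef S0 a) : ℝ) : ℂ) with hβ
  set W := vecMulVec a (star a) with hW
  have h1 : S0 * S0⁻¹ = 1 := S0_mul_inv hS0
  have h2 : S0 * (S0⁻¹ * W * S0⁻¹) = W * S0⁻¹ := by
    rw [← Matrix.mul_assoc, ← Matrix.mul_assoc, h1, Matrix.one_mul]
  have h3 : W * (S0⁻¹ * W * S0⁻¹) = ((dcoef S0 a : ℝ) : ℂ) • (W * S0⁻¹) := by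
    have h4 : W * S0⁻¹ * W = ((dcoef S0 a : ℝ) : ℂ) • W := by
      rw [hW, vecMulVec_mul', vecMulVec_mul_vecMulVec', ← Matrix.dotProduct_mulVec,
        dcoef_complex hS0]
    calc W * (S0⁻¹ * W * S0⁻¹) = (W * S0⁻¹ * W) * S0⁻¹ := by
          rw [Matrix.mul_assoc, Matrix.mul_assoc, Matrix.mul_assoc]
      _ = ((dcoef S0 a : ℝ) : ℂ) • (W * S0⁻¹) := by rw [h4, Matrix.smul_mul]
  have expand : Sig S0 a γ * (S0⁻¹ - β • (S0⁻¹ * W * S0⁻¹))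
      = 1 + ((γ:ℂ) - β - (γ:ℂ) * β * ((dcoef S0 a : ℝ) : ℂ)) • (W * S0⁻¹) := by
    rw [Sig, ← hW, Matrix.add_mul, Matrix.mul_sub, Matrix.mul_smul, h1, h2,
      Matrix.smul_mul, Matrix.mul_sub, Matrix.mul_smul, h3]
    module
  rw [expand]
  have hcoef : (γ:ℂ) - β - (γ:ℂ) * β * ((dcoef S0 a : ℝ) : ℂ) = 0 := by
    rw [hβ]
    push_cast
    field_simp
    ring
  rw [hcoef, zero_smul, add_zero]

lemma mdist_eq (hS0 : S0.PosDef) (ha : a ≠ 0) {γ : ℝ} (hγ : 0 ≤ γ) (y : Fin L → ℂ) :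
    mdist S0 a y γ = (star y ⬝ᵥ S0⁻¹ *ᵥ y).re
      - (γ / (1 + γ * dcoef S0 a)) * Complex.normSq (star a ⬝ᵥ S0⁻¹ *ᵥ y) := by
  rw [mdist, Sig_inv hS0 ha hγ]
  set z : ℂ := star a ⬝ᵥ S0⁻¹ *ᵥ y with hz
  have key : (S0⁻¹ * vecMulVec a (star a) * S0⁻¹) *ᵥ y = z • (S0⁻¹ *ᵥ a) := by
    rw [← Matrix.mulVec_mulVec, ← Matrix.mulVec_mulVec, vecMulVec_mulVec', hz,
      Matrix.mulVec_smul]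
  rw [Matrix.sub_mulVec, dotProduct_sub, Matrix.smul_mulVec, key]
  have h2 : star y ⬝ᵥ z • (S0⁻¹ *ᵥ a) = (Complex.normSq z : ℂ) := by
    rw [dotProduct_smul, herm_cross hS0.isHermitian.inv y a, ← hz, smul_eq_mul,
      Complex.mul_conj]
  rw [dotProduct_smul, h2, smul_eq_mul, ← Complex.ofReal_mul, Complex.sub_re,
    Complex.ofReal_re]

lemma Sig_det_re (hS0 : S0.PosDef) (γ : ℝ) :
    (Sig S0 a γ).det.re = S0.det.re * (1 + γ * dcoef S0 a) := by
  have hdet := hS0.det_pos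
  have him : S0.det.im = 0 := ((Complex.lt_def.mp hdet).2).symm
  have h1 : Sig S0 a γ = S0 + replicateCol Unit ((γ:ℂ) • a) * replicateRow Unit (star a) := by
    rw [Sig, vecMulVec_eq Unit, replicateCol_smul, Matrix.smul_mul]
  have hA : IsUnit S0.det := isUnit_iff_ne_zero.mpr hdet.ne'
  rw [h1, det_add_replicateCol_mul_replicateRow hA]
  have h2 : (1 + replicateRow Unit (star a) * S0⁻¹ * replicateCol Unit ((γ:ℂ) • a)).det
      = 1 + (γ:ℂ) * ((dcoef S0 a : ℝ) : ℂ) := by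
    rw [det_unique, Matrix.add_apply, Matrix.one_apply_eq, ← replicateRow_vecMul, replicateRow_mul_replicateCol_apply,
      dotProduct_smul, ← Matrix.dotProduct_mulVec, dcoef_complex hS0, smul_eq_mul]
  rw [h2, Complex.mul_re]
  simp [him]

lemma S0_det_re_pos (hS0 : S0.PosDef) : 0 < S0.det.re :=
  (Complex.lt_def.mp hS0.det_pos).1

end mainlemmas

lemma scalar_min {d c γ γh : ℝ} (hd : 0 < d) (hc : 0 ≤ c) (hγ : 0 ≤ γ)
    (hγh : γh = max ((c - d) / d ^ 2) 0) :
    -(γh / (1 + γh * d)) * c + Real.log (1 + γh * d)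
      ≤ -(γ / (1 + γ * d)) * c + Real.log (1 + γ * d) := by
  have hγh0 : 0 ≤ γh := hγh ▸ le_max_right _ _
  set k := c / d with hk
  have hk0 : 0 ≤ k := div_nonneg hc hd.le
  set t := 1 + γ * d with htdef
  set ts := 1 + γh * d with htsdef
  have ht : 1 ≤ t := by nlinarith
  have hts1 : 1 ≤ ts := by nlinarith
  have ht0 : 0 < t := by linarith
  have hts0 : 0 < ts := by linarith
  have hts : ts = max k 1 := by
    rcases le_total c d with h | h
    · have h1 : (c - d) / d ^ 2 ≤ 0 :=
        div_nonpos_of_nonpos_of_nonneg (by linarith) (by positivity)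
      have h2 : γh = 0 := by rw [hγh]; exact max_eq_right h1
      have hk1 : k ≤ 1 := by rw [hk]; exact div_le_one_of_le₀ h hd.le
      rw [htsdef, h2, max_eq_right hk1]; ring
    · have h1 : 0 ≤ (c - d) / d ^ 2 := div_nonneg (by linarith) (by positivity)
      have h2 : γh = (c - d) / d ^ 2 := by rw [hγh]; exact max_eq_left h1
      have hk1 : 1 ≤ k := (one_le_div hd).mpr h
      rw [htsdef, h2, max_eq_left hk1, hk]
      field_simp
      ring
  have hγd : γ * d = t - 1 := by rw [htdef]; ring
  have hγhd : γh * d = ts - 1 := by rw [htsdef]; ring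
  have e1 : -(γ / t) * c = k / t - k := by
    rw [hk]; field_simp; linear_combination c * hγd
  have e2 : -(γh / ts) * c = k / ts - k := by
    rw [hk]; field_simp; linear_combination c * hγhd
  have hlog : (t - ts) / t ≤ Real.log t - Real.log ts := by
    have h1 := Real.one_sub_inv_le_log_of_pos (div_pos ht0 hts0)
    rw [Real.log_div ht0.ne' hts0.ne'] at h1
    have h2 : 1 - (t / ts)⁻¹ = (t - ts) / t := by field_simp
    linarith [h2 ▸ h1]
  have hprod : 0 ≤ (t - ts) * (ts - k) := by
    rcases le_total k 1 with h | h
    · have h2 : ts = 1 := by rw [hts, max_eq_right h]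
      nlinarith
    · have h2 : ts = k := by rw [hts, max_eq_left h]
      simp [h2]
  have main : k / ts - k / t ≤ (t - ts) / t := by
    rw [div_sub_div _ _ hts0.ne' ht0.ne', div_le_div_iff₀ (by positivity) ht0]
    nlinarith [mul_nonneg hprod ht0.le]
  rw [e1, e2]
  linarith

theorem stmt19 (L M : ℕ) (hL : 0 < L) (hM : 0 < M)
    (S0 : Matrix (Fin L) (Fin L) ℂ) (hS0 : S0.PosDef)
    (a : Fin L → ℂ) (ha : a ≠ 0) (y : Fin M → Fin L → ℂ)
    (S : Matrix (Fin L) (Fin L) ℂ)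
    (hS : S = ((M : ℂ))⁻¹ • ∑ m, vecMulVec (y m) (star (y m)))
    (γhat : ℝ)
    (hγhat : γhat
      = max ((star a ⬝ᵥ S0⁻¹ *ᵥ ((S - S0) *ᵥ S0⁻¹ *ᵥ a)).re / (dcoef S0 a) ^ 2) 0) :
    ∀ γ ≥ (0 : ℝ), obj S0 a y 1 (fun t => t) γhat ≤ obj S0 a y 1 (fun t => t) γ := by
  intro γ hγ
  have hd : 0 < dcoef S0 a := dcoef_pos hS0 ha
  set d := dcoef S0 a with hdd
  set z : Fin M → ℂ := fun m => star a ⬝ᵥ S0⁻¹ *ᵥ y m with hzdef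
  set c : ℝ := (M:ℝ)⁻¹ * ∑ m, Complex.normSq (z m) with hcdef
  have hc : 0 ≤ c :=
    mul_nonneg (by positivity) (Finset.sum_nonneg fun _ _ => Complex.normSq_nonneg _)
  have hMR : (M:ℝ) ≠ 0 := Nat.cast_ne_zero.mpr hM.ne'
  -- identify the numerator
  have hkey : (star a ⬝ᵥ S0⁻¹ *ᵥ ((S - S0) *ᵥ S0⁻¹ *ᵥ a)).re = c - d := by
    have hv : S0 *ᵥ (S0⁻¹ *ᵥ a) = a := by
      rw [Matrix.mulVec_mulVec, S0_mul_inv hS0, Matrix.one_mulVec]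
    have hSv : S *ᵥ (S0⁻¹ *ᵥ a)
        = (M:ℂ)⁻¹ • ∑ m, (star (y m) ⬝ᵥ (S0⁻¹ *ᵥ a)) • y m := by
      rw [hS, Matrix.smul_mulVec, sum_mulVec']
      congr 1
      exact Finset.sum_congr rfl fun m _ => vecMulVec_mulVec' _ _ _
    have hcplx : star a ⬝ᵥ S0⁻¹ *ᵥ ((S - S0) *ᵥ S0⁻¹ *ᵥ a)
        = ((c : ℝ) : ℂ) - ((d : ℝ) : ℂ) := by
      rw [Matrix.sub_mulVec, hv, hSv, Matrix.mulVec_sub, dotProduct_sub,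
        dcoef_complex hS0]
      congr 1
      rw [Matrix.mulVec_smul, dotProduct_smul, mulVec_sum', dotProduct_sum']
      have : ∀ m : Fin M, star a ⬝ᵥ S0⁻¹ *ᵥ ((star (y m) ⬝ᵥ (S0⁻¹ *ᵥ a)) • y m)
          = (Complex.normSq (z m) : ℂ) := by
        intro m
        rw [Matrix.mulVec_smul, dotProduct_smul, smul_eq_mul]
        have h1 : star (y m) ⬝ᵥ (S0⁻¹ *ᵥ a) = starRingEnd ℂ (z m) :=
          herm_cross hS0.isHermitian.inv (y m) a
        rw [h1, hzdef]
        simp [mul_comm, Complex.mul_conj]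
      rw [Finset.sum_congr rfl fun m _ => this m, smul_eq_mul]
      rw [hcdef]
      push_cast
      ring
    rw [hcplx]
    simp [Complex.sub_re]
  have hγhat' : γhat = max ((c - d) / d ^ 2) 0 := by rw [hγhat, hkey]
  have hγh0 : 0 ≤ γhat := hγhat' ▸ le_max_right _ _
  -- closed form of the objective
  have hobj : ∀ γ' : ℝ, 0 ≤ γ' → obj S0 a y 1 (fun t => t) γ'
      = ((M:ℝ)⁻¹ * ∑ m, (star (y m) ⬝ᵥ S0⁻¹ *ᵥ y m).re + Real.log (S0.det.re))
        + (-(γ' / (1 + γ' * d)) * c + Real.log (1 + γ' * d)) := by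
    intro γ' hγ'
    have ht0 : (0:ℝ) < 1 + γ' * d := by nlinarith
    rw [obj]
    have hsum : ∑ m, mdist S0 a (y m) γ'
        = ∑ m, (star (y m) ⬝ᵥ S0⁻¹ *ᵥ y m).re
          - (γ' / (1 + γ' * d)) * ∑ m, Complex.normSq (z m) := by
      rw [Finset.mul_sum, ← Finset.sum_sub_distrib]
      exact Finset.sum_congr rfl fun m _ => by
        rw [mdist_eq hS0 ha hγ' (y m), hzdef]
    rw [Sig_det_re hS0, Real.log_mul (S0_det_re_pos hS0).ne' ht0.ne']
    simp only [hsum]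
    rw [hcdef]
    field_simp
    ring
  rw [hobj γhat hγh0, hobj γ hγ]
  have := scalar_min hd hc hγ hγhat'
  linarith
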